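/- arXiv:1612.04541 — 2 statements merged into one kernel-verified Lean document; each statement's English description precedes it below -/
import Mathlib

section
/- (Distance formula (4.6), segment A₂F₀₃) Assume u = w and B < 0 (so a₂₂ < 0 and a₃₃ + a₀₃ = a₀₀ + a₀₃ < 0). Then −(a₀₂ + a₂₃)/√(2·a₂₂·(a₃₃ + a₀₃)) = cot(π/u)·√((cos(π/v) + sin²(π/u))/(2·(1 − cos(π/v)))). (This quantity is cosh of the hyperbolic distance between the vertex A₂ and the midpoint F₀₃ of the edge A₀A₃ of W_{uvw}, F₀₃ having vector a₀ + a₃.) -/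
open Real Matrix

/-- The Coxeter–Schläfli matrix of the complete orthoscheme `W_{uvw}`. -/
noncomputable def CSmatrix (u v w : ℝ) : Matrix (Fin 4) (Fin 4) ℝ :=
  !![1, -cos (π/u), 0, 0;
     -cos (π/u), 1, -cos (π/v), 0;
     0, -cos (π/v), 1, -cos (π/w);
     0, 0, -cos (π/w), 1]

/-- The inverse of the Coxeter–Schläfli matrix; its entries are the `a_{ij}`. -/
noncomputable def CSinv (u v w : ℝ) : Matrix (Fin 4) (Fin 4) ℝ :=
  (CSmatrix u v w)⁻¹

/-!
With `c = cos (π/u)`, `d = cos (π/v)` and `s = sin (π/u)`, the symmetry `u = w` makes the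
entries of `b⁻¹` polynomials in `c, d` divided by `B = s⁴ - d²`:
`a₂₂ = s²/B`, `a₀₀ + a₀₃ = (1 - d)(d + s²)/B` and `a₀₂ + a₂₃ = c (d + s²)/B`.
The Gram factor `2 a₂₂ (a₀₀ + a₀₃)` is then `(s/B)² · 2(1 - d)(d + s²)`, so its square root
cancels one factor `√(d + s²)` of the numerator, and `B < 0` fixes the sign.
-/

def pathGramMatrix (a b c : ℝ) : Matrix (Fin 4) (Fin 4) ℝ :=
  !![1, -a, 0, 0;
     -a, 1, -b, 0;
     0, -b, 1, -c;
     0, 0, -c, 1]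

theorem CSmatrix_eq_pathGramMatrix (u v w : ℝ) :
    CSmatrix u v w = pathGramMatrix (cos (π/u)) (cos (π/v)) (cos (π/w)) :=
  rfl

theorem det_pathGramMatrix (a b c : ℝ) :
    (pathGramMatrix a b c).det = (1 - a^2) * (1 - c^2) - b^2 := by
  simp [pathGramMatrix, det_succ_row_zero, Fin.sum_univ_succ, Fin.succAbove]
  ring

theorem inv_pathGramMatrix (a b c : ℝ) (hB : (1 - a^2) * (1 - c^2) - b^2 ≠ 0) :
    (pathGramMatrix a b c)⁻¹ = ((1 - a^2) * (1 - c^2) - b^2)⁻¹ •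
      !![1 - b^2 - c^2, a * (1 - c^2), a * b, a * b * c;
         a * (1 - c^2), 1 - c^2, b, b * c;
         a * b, b, 1 - a^2, c * (1 - a^2);
         a * b * c, b * c, c * (1 - a^2), 1 - a^2 - b^2] := by
  apply inv_eq_right_inv
  ext i j
  fin_cases i <;> fin_cases j <;>
    simp [pathGramMatrix, mul_apply, Fin.sum_univ_four] <;> field_simp <;> ring

section Symmetric

variable (a b : ℝ)

theorem pathGramMatrix_inv_two_two (hB : (1 - a^2) * (1 - a^2) - b^2 ≠ 0) :
    (pathGramMatrix a b a)⁻¹ 2 2 = (1 - a^2) / ((1 - a^2) * (1 - a^2) - b^2) := by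
  rw [inv_pathGramMatrix a b a hB]
  simp
  ring

theorem pathGramMatrix_inv_three_three (hB : (1 - a^2) * (1 - a^2) - b^2 ≠ 0) :
    (pathGramMatrix a b a)⁻¹ 3 3 = (pathGramMatrix a b a)⁻¹ 0 0 := by
  rw [inv_pathGramMatrix a b a hB]
  simp [-mul_eq_mul_left_iff]
  ring

theorem pathGramMatrix_inv_zero_zero_add_zero_three (hB : (1 - a^2) * (1 - a^2) - b^2 ≠ 0) :
    (pathGramMatrix a b a)⁻¹ 0 0 + (pathGramMatrix a b a)⁻¹ 0 3 =
      (1 - b) * (b + (1 - a^2)) / ((1 - a^2) * (1 - a^2) - b^2) := by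
  rw [inv_pathGramMatrix a b a hB]
  simp
  ring

theorem pathGramMatrix_inv_zero_two_add_two_three (hB : (1 - a^2) * (1 - a^2) - b^2 ≠ 0) :
    (pathGramMatrix a b a)⁻¹ 0 2 + (pathGramMatrix a b a)⁻¹ 2 3 =
      a * (b + (1 - a^2)) / ((1 - a^2) * (1 - a^2) - b^2) := by
  rw [inv_pathGramMatrix a b a hB]
  simp
  ring

end Symmetric

theorem neg_div_sqrt_gram_eq {a s p q B : ℝ} (hs : 0 < s) (hp : 0 < p) (hq : 0 < q)
    (hB : B < 0) :
    -(a * p / B) / √(2 * (s^2 / B) * (q * p / B)) = a / s * √(p / (2 * q)) := by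
  have hgram : 2 * (s^2 / B) * (q * p / B) = (s / -B)^2 * ((2 * q) * p) := by ring
  have hsB : 0 ≤ s / -B := div_nonneg hs.le (by linarith)
  rw [hgram, sqrt_mul (sq_nonneg _), sqrt_sq hsB, sqrt_mul (by positivity),
    sqrt_div' _ (by positivity)]
  have hB0 : B ≠ 0 := hB.ne
  have : 0 < √(2 * q) := sqrt_pos.mpr (by positivity)
  have : 0 < √p := sqrt_pos.mpr hp
  field_simp
  rw [sq_sqrt hp.le]

theorem sin_pi_div_pos {x : ℝ} (hx : 1 < x) : 0 < sin (π / x) :=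
  sin_pos_of_pos_of_lt_pi (by positivity) (div_lt_self pi_pos hx)

theorem cos_pi_div_pos {x : ℝ} (hx : 2 < x) : 0 < cos (π / x) := by
  have hpos : 0 < π / x := div_pos pi_pos (by linarith)
  exact cos_pos_of_mem_Ioo ⟨by linarith [pi_pos],
    (div_lt_div_iff_of_pos_left pi_pos (by linarith) two_pos).mpr hx⟩

theorem cos_pi_div_lt_one {x : ℝ} (hx : 1 < x) : cos (π / x) < 1 := by
  rw [← cos_zero]
  exact cos_lt_cos_of_nonneg_of_le_pi le_rfl (div_le_self pi_pos.le (by linarith))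
    (by positivity)

theorem stmt14_general (u v w : ℝ) (hu : 3 ≤ u) (hv : 3 ≤ v)
    (huw : u = w) (hBneg : (CSmatrix u v w).det < 0) :
    CSinv u v w 2 2 < 0 ∧
    CSinv u v w 3 3 + CSinv u v w 0 3 = CSinv u v w 0 0 + CSinv u v w 0 3 ∧
    CSinv u v w 0 0 + CSinv u v w 0 3 < 0 ∧
    -(CSinv u v w 0 2 + CSinv u v w 2 3) /
        Real.sqrt (2 * CSinv u v w 2 2 * (CSinv u v w 3 3 + CSinv u v w 0 3)) =
      Real.cot (π/u) *
        Real.sqrt ((cos (π/v) + sin (π/u) ^ 2) / (2 * (1 - cos (π/v)))) := by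
  subst huw
  have hs := sin_pi_div_pos (by linarith : 1 < u)
  have hd := cos_pi_div_pos (by linarith : 2 < v)
  have hd1 := cos_pi_div_lt_one (by linarith : 1 < v)
  have hsc : sin (π/u) ^ 2 = 1 - cos (π/u) ^ 2 := sin_sq _
  rw [CSmatrix_eq_pathGramMatrix, det_pathGramMatrix] at hBneg
  simp only [CSinv, CSmatrix_eq_pathGramMatrix,
    pathGramMatrix_inv_three_three _ _ hBneg.ne, pathGramMatrix_inv_two_two _ _ hBneg.ne,
    pathGramMatrix_inv_zero_zero_add_zero_three _ _ hBneg.ne,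
    pathGramMatrix_inv_zero_two_add_two_three _ _ hBneg.ne, ← hsc]
  rw [← hsc] at hBneg
  refine ⟨div_neg_of_pos_of_neg (by positivity) hBneg, trivial,
    div_neg_of_pos_of_neg (mul_pos (by linarith) (by positivity)) hBneg, ?_⟩
  rw [neg_div_sqrt_gram_eq hs (by positivity) (by linarith) hBneg, cot_eq_cos_div_sin]

theorem stmt14 (u v w : ℝ) (hu : 3 ≤ u) (hv : 3 ≤ v) (hw : 3 ≤ w)
    (huw : u = w) (hBneg : (CSmatrix u v w).det < 0) :
    CSinv u v w 2 2 < 0 ∧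
    CSinv u v w 3 3 + CSinv u v w 0 3 = CSinv u v w 0 0 + CSinv u v w 0 3 ∧
    CSinv u v w 0 0 + CSinv u v w 0 3 < 0 ∧
    -(CSinv u v w 0 2 + CSinv u v w 2 3) /
        Real.sqrt (2 * CSinv u v w 2 2 * (CSinv u v w 3 3 + CSinv u v w 0 3)) =
      Real.cot (π/u) *
        Real.sqrt ((cos (π/v) + sin (π/u) ^ 2) / (2 * (1 - cos (π/v)))) :=
  stmt14_general u v w hu hv huw hBneg
end

section
/- (Distance formula (4.11), segment A₂Q in the truncated orthoscheme) Assume B < 0 and sin²(π/u) < cos²(π/v) (the vertex A₃ is an outer point, so a₃₃ > 0 while a₂₂ < 0). Let q = a₂ − (a₂₃/a₃₃)·a₃ be the vector of the truncation point Q = pol(A₃) ∩ A₃A₂. Then ⟨q,q⟩ = a₂₂/a₃₃ < 0 and −⟨a₂, q⟩/√(⟨a₂,a₂⟩·⟨q,q⟩) = 1/√(a₃₃) = √(1 + sin²(π/u)·cos²(π/w)/(cos²(π/v) − sin²(π/u))). (This quantity is cosh of the hyperbolic distance from the vertex A₂ to the point Q.) -/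
open Real Matrix

/-!
The entries of `b⁻¹` are cofactors of the tridiagonal matrix `b` divided by `B`. The point `q` is
the projection of `a₂` onto the polar hyperplane of `a₃`, so `⟨a₂, q⟩ = ⟨q, q⟩ = a₂₂ - a₂₃² / a₃₃`,
and Jacobi's complementary-minor identity `a₂₂ a₃₃ - a₂₃² = a₂₂` turns this into `a₂₂ / a₃₃`. The
cosine formula then collapses to `1 / √a₃₃`, and `1 / a₃₃ = B / (1 - cos²(π/u) - cos²(π/v))`
expands to the stated closed form.
-/

lemma LinearMap.BilinForm.apply_sub_proj {K V : Type*} [Field K] [AddCommGroup V] [Module K V]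
    (B : LinearMap.BilinForm K V) (x y : V) :
    B x (x - (B x y / B y y) • y) = B x x - B x y ^ 2 / B y y := by
  simp only [map_sub, map_smul, smul_eq_mul]
  ring

lemma LinearMap.BilinForm.apply_sub_proj_sub_proj {K V : Type*} [Field K] [AddCommGroup V]
    [Module K V] (B : LinearMap.BilinForm K V) {x y : V} (hyx : B y x = B x y) (hy : B y y ≠ 0) :
    B (x - (B x y / B y y) • y) (x - (B x y / B y y) • y) = B x x - B x y ^ 2 / B y y := by
  simp only [map_sub, map_smul, LinearMap.sub_apply, LinearMap.smul_apply, smul_eq_mul, hyx]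
  field_simp
  ring

lemma det_CSmatrix (u v w : ℝ) : (CSmatrix u v w).det =
    1 - cos (π/u) ^ 2 - cos (π/v) ^ 2 - cos (π/w) ^ 2 * (1 - cos (π/u) ^ 2) := by
  simp [CSmatrix, Matrix.det_succ_row_zero, Fin.sum_univ_succ, Fin.succAbove]
  ring

noncomputable def CSadj (u v w : ℝ) : Matrix (Fin 4) (Fin 4) ℝ :=
  let x := cos (π/u); let y := cos (π/v); let z := cos (π/w)
  !![1 - y^2 - z^2, x * (1 - z^2), x * y, x * y * z;
     x * (1 - z^2), 1 - z^2, y, y * z;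
     x * y, y, 1 - x^2, z * (1 - x^2);
     x * y * z, y * z, z * (1 - x^2), 1 - x^2 - y^2]

lemma CSmatrix_mul_CSadj (u v w : ℝ) :
    CSmatrix u v w * CSadj u v w = (CSmatrix u v w).det • 1 := by
  rw [det_CSmatrix]
  ext i j
  fin_cases i <;> fin_cases j <;>
    simp [CSmatrix, CSadj, Matrix.mul_apply, Fin.sum_univ_four] <;> ring

lemma CSinv_eq_smul_CSadj {u v w : ℝ} (hdet : (CSmatrix u v w).det ≠ 0) :
    CSinv u v w = (CSmatrix u v w).det⁻¹ • CSadj u v w := by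
  refine inv_eq_right_inv ?_
  rw [Matrix.mul_smul, CSmatrix_mul_CSadj, smul_smul, inv_mul_cancel₀ hdet, one_smul]

section Entries

variable {u v w : ℝ} (hdet : (CSmatrix u v w).det ≠ 0)
include hdet

lemma CSinv_two_two :
    CSinv u v w 2 2 = (CSmatrix u v w).det⁻¹ * (1 - cos (π/u) ^ 2) := by
  rw [CSinv_eq_smul_CSadj hdet]; rfl

lemma CSinv_two_three :
    CSinv u v w 2 3 = (CSmatrix u v w).det⁻¹ * (cos (π/w) * (1 - cos (π/u) ^ 2)) := by
  rw [CSinv_eq_smul_CSadj hdet]; rfl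

lemma CSinv_three_two : CSinv u v w 3 2 = CSinv u v w 2 3 := by
  rw [CSinv_eq_smul_CSadj hdet]; rfl

lemma CSinv_three_three :
    CSinv u v w 3 3 = (CSmatrix u v w).det⁻¹ * (1 - cos (π/u) ^ 2 - cos (π/v) ^ 2) := by
  rw [CSinv_eq_smul_CSadj hdet]; rfl

/-- Jacobi: the `{2,3}` minor of `b⁻¹` is the complementary `{0,1}` minor `1 - cos²(π/u)` of `b`
divided by `B`, which is `a₂₂` again. -/
lemma CSinv_two_two_mul_three_three_sub_sq :
    CSinv u v w 2 2 * CSinv u v w 3 3 - CSinv u v w 2 3 ^ 2 = CSinv u v w 2 2 := by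
  have hminor : (1 - cos (π/u) ^ 2) * (1 - cos (π/u) ^ 2 - cos (π/v) ^ 2)
      - (cos (π/w) * (1 - cos (π/u) ^ 2)) ^ 2 = (CSmatrix u v w).det * (1 - cos (π/u) ^ 2) := by
    rw [det_CSmatrix]; ring
  rw [CSinv_two_two hdet, CSinv_two_three hdet, CSinv_three_three hdet]
  linear_combination (CSmatrix u v w).det⁻¹ ^ 2 * hminor
    + (CSmatrix u v w).det⁻¹ * (1 - cos (π/u) ^ 2) * inv_mul_cancel₀ hdet

lemma inv_CSinv_three_three (h : sin (π/u) ^ 2 ≠ cos (π/v) ^ 2) :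
    (CSinv u v w 3 3)⁻¹ =
      1 + sin (π/u) ^ 2 * cos (π/w) ^ 2 / (cos (π/v) ^ 2 - sin (π/u) ^ 2) := by
  have hsin : sin (π/u) ^ 2 = 1 - cos (π/u) ^ 2 := by linarith [sin_sq_add_cos_sq (π/u)]
  have hN : 1 - cos (π/u) ^ 2 - cos (π/v) ^ 2 ≠ 0 := by
    intro h0; exact h (by linarith)
  have hN' : cos (π/v) ^ 2 - (1 - cos (π/u) ^ 2) ≠ 0 := by
    intro h0; exact hN (by linarith)
  rw [CSinv_three_three hdet, hsin, mul_inv, inv_inv]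
  field_simp
  linear_combination (cos (π/v) ^ 2 - (1 - cos (π/u) ^ 2)) * det_CSmatrix u v w

end Entries

section Signs

variable {u v w : ℝ} (hB : (CSmatrix u v w).det < 0)
include hB

lemma CSinv_two_two_neg (hu : 1 < u) : CSinv u v w 2 2 < 0 := by
  have hsin : 0 < sin (π/u) :=
    sin_pos_of_pos_of_lt_pi (by positivity) (div_lt_self pi_pos hu)
  have hx : 0 < 1 - cos (π/u) ^ 2 := by nlinarith [sin_sq_add_cos_sq (π/u)]
  rw [CSinv_two_two hB.ne]
  exact mul_neg_of_neg_of_pos (inv_lt_zero.mpr hB) hx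

lemma CSinv_three_three_pos (h : sin (π/u) ^ 2 < cos (π/v) ^ 2) : 0 < CSinv u v w 3 3 := by
  have hN : 1 - cos (π/u) ^ 2 - cos (π/v) ^ 2 < 0 := by nlinarith [sin_sq_add_cos_sq (π/u)]
  rw [CSinv_three_three hB.ne]
  exact mul_pos_of_neg_of_neg (inv_lt_zero.mpr hB) hN

end Signs

lemma neg_div_sqrt_mul_div_eq {α t : ℝ} (hα : α < 0) (ht : 0 < t) :
    -(α / t) / √(α * (α / t)) = 1 / √t := by
  have hsqrt : √(α * (α / t)) = -α / √t := by
    rw [show α * (α / t) = (-α) ^ 2 / t by ring, sqrt_div' _ ht.le, sqrt_sq (by linarith)]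
  have hst0 : 0 < √t := sqrt_pos.mpr ht
  rw [hsqrt]
  field_simp
  rw [sq_sqrt ht.le, mul_div_cancel_left₀ t hα.ne]

theorem stmt18_general (u v w : ℝ) (hu : 3 ≤ u)
    {V : Type*} [AddCommGroup V] [Module ℝ V]
    (Bf : LinearMap.BilinForm ℝ V)
    (a : Fin 4 → V)
    (hGram : ∀ i j : Fin 4, Bf (a i) (a j) = CSinv u v w i j)
    (hBneg : (CSmatrix u v w).det < 0)
    (h1 : sin (π/u) ^ 2 < cos (π/v) ^ 2)
    (q : V) (hq : q = a 2 - (CSinv u v w 2 3 / CSinv u v w 3 3) • a 3) :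
    0 < CSinv u v w 3 3 ∧ CSinv u v w 2 2 < 0 ∧
    Bf q q = CSinv u v w 2 2 / CSinv u v w 3 3 ∧ Bf q q < 0 ∧
    -Bf (a 2) q / Real.sqrt (Bf (a 2) (a 2) * Bf q q) = 1 / Real.sqrt (CSinv u v w 3 3) ∧
    1 / Real.sqrt (CSinv u v w 3 3) =
      Real.sqrt (1 + sin (π/u) ^ 2 * cos (π/w) ^ 2 /
        (cos (π/v) ^ 2 - sin (π/u) ^ 2)) := by
  have h33 : 0 < CSinv u v w 3 3 := CSinv_three_three_pos hBneg h1
  have h22 : CSinv u v w 2 2 < 0 := CSinv_two_two_neg hBneg (by linarith)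
  have hschur : CSinv u v w 2 2 - CSinv u v w 2 3 ^ 2 / CSinv u v w 3 3
      = CSinv u v w 2 2 / CSinv u v w 3 3 := by
    field_simp; linear_combination CSinv_two_two_mul_three_three_sub_sq hBneg.ne
  rw [← hGram 2 3, ← hGram 3 3] at hq
  have h2q : Bf (a 2) q = CSinv u v w 2 2 / CSinv u v w 3 3 := by
    rw [hq, Bf.apply_sub_proj, hGram, hGram, hGram, hschur]
  have hqq : Bf q q = CSinv u v w 2 2 / CSinv u v w 3 3 := by
    have h32 : Bf (a 3) (a 2) = Bf (a 2) (a 3) := by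
      rw [hGram, hGram, CSinv_three_two hBneg.ne]
    rw [hq, Bf.apply_sub_proj_sub_proj h32 (by rw [hGram]; exact h33.ne'), hGram, hGram, hGram,
      hschur]
  refine ⟨h33, h22, hqq, hqq ▸ div_neg_of_neg_of_pos h22 h33, ?_, ?_⟩
  · rw [h2q, hqq, hGram]
    exact neg_div_sqrt_mul_div_eq h22 h33
  · rw [one_div, ← sqrt_inv, inv_CSinv_three_three hBneg.ne h1.ne]

theorem stmt18 (u v w : ℝ) (hu : 3 ≤ u) (hv : 3 ≤ v) (hw : 3 ≤ w)
    (hdet : (CSmatrix u v w).det ≠ 0)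
    {V : Type*} [AddCommGroup V] [Module ℝ V]
    (Bf : LinearMap.BilinForm ℝ V)
    (hsymm : ∀ x y : V, Bf x y = Bf y x)
    (a : Fin 4 → V)
    (hGram : ∀ i j : Fin 4, Bf (a i) (a j) = CSinv u v w i j)
    (hBneg : (CSmatrix u v w).det < 0)
    (h1 : sin (π/u) ^ 2 < cos (π/v) ^ 2)
    (q : V) (hq : q = a 2 - (CSinv u v w 2 3 / CSinv u v w 3 3) • a 3) :
    0 < CSinv u v w 3 3 ∧ CSinv u v w 2 2 < 0 ∧
    Bf q q = CSinv u v w 2 2 / CSinv u v w 3 3 ∧ Bf q q < 0 ∧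
    -Bf (a 2) q / Real.sqrt (Bf (a 2) (a 2) * Bf q q) = 1 / Real.sqrt (CSinv u v w 3 3) ∧
    1 / Real.sqrt (CSinv u v w 3 3) =
      Real.sqrt (1 + sin (π/u) ^ 2 * cos (π/w) ^ 2 /
        (cos (π/v) ^ 2 - sin (π/u) ^ 2)) :=
  stmt18_general u v w hu Bf a hGram hBneg h1 q hq
end
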